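/- For every odd integer ℓ with 1 ≤ ℓ ≤ 2n+1, there exists a maximal pairwise anticommuting subset of (𝔽₂)^{2n} of cardinality ℓ. -/

import Mathlib

/-- The phase space `(𝔽₂)^{2n}`, modeled as pairs of vectors in `𝔽₂ⁿ`. -/
abbrev V (n : ℕ) := (Fin n → ZMod 2) × (Fin n → ZMod 2)

/-- The standard symplectic bilinear form `ω((a,b),(c,d)) = a·d + b·c`. -/
def sympl {n : ℕ} (P Q : V n) : ZMod 2 :=
  ∑ i, (P.1 i * Q.2 i + P.2 i * Q.1 i)

/-- A finite set is (pairwise) anticommuting if `ω(P,Q) = 1` for all distinct `P, Q`. -/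
def AC {n : ℕ} (G : Finset (V n)) : Prop :=
  ∀ P ∈ G, ∀ Q ∈ G, P ≠ Q → sympl P Q = 1

/-- A maximal pairwise anticommuting set: no strictly larger set is anticommuting. -/
def MaxAC {n : ℕ} (G : Finset (V n)) : Prop :=
  AC G ∧ ∀ H : Finset (V n), G ⊆ H → AC H → H = G

/-!
An anticommuting set of odd size whose elements sum to `0` is maximal: a new element `Q` would
satisfy `ω(Q, P) = 1` for every `P` in the set, hence `ω(Q, 0) = 1` by summing. For every
`k ≤ n` the `2k` Majorana vectors of the Jordan–Wigner encoding of `k` modes anticommute pairwise,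
and their sum `(1_{<k}, 0)` anticommutes with each of them; these `2k + 1` vectors sum to `0`.
Distinctness comes for free, since `ω(P, P) = 0`.
-/

open Finset

section Construction

variable {n : ℕ}

lemma sympl_comm (P Q : V n) : sympl P Q = sympl Q P := by
  simp only [sympl, mul_comm, add_comm]

lemma sympl_self (P : V n) : sympl P P = 0 := by
  simp [sympl, mul_comm (P.2 _), ← two_mul, CharTwo.two_eq_zero]

lemma sympl_sum_right (Q : V n) (s : Finset (V n)) :
    sympl Q (∑ P ∈ s, P) = ∑ P ∈ s, sympl Q P := by
  simp only [sympl, Prod.fst_sum, Prod.snd_sum, Finset.sum_apply, mul_sum,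
    ← sum_add_distrib]
  exact sum_comm

lemma ne_of_sympl_eq_one {P Q : V n} (h : sympl P Q = 1) : P ≠ Q := by
  rintro rfl
  simp [sympl_self] at h

lemma maxAC_of_sum_eq_zero {G : Finset (V n)} (hG : AC G) (hodd : Odd G.card)
    (hsum : ∑ P ∈ G, P = 0) : MaxAC G := by
  refine ⟨hG, fun H hGH hH => ?_⟩
  by_contra hne
  obtain ⟨Q, hQH, hQG⟩ := exists_of_ssubset (hGH.ssubset_of_ne (Ne.symm hne))
  have hQ : ∀ P ∈ G, sympl Q P = 1 := fun P hP =>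
    hH Q hQH P (hGH hP) (ne_of_mem_of_not_mem hP hQG).symm
  have : sympl Q (∑ P ∈ G, P) = 1 := by
    rw [sympl_sum_right, sum_congr rfl hQ, sum_const, nsmul_one,
      ZMod.natCast_eq_one_iff_odd]
    exact hodd
  simp [hsum, sympl] at this

def prefixVec (n k : ℕ) : Fin n → ZMod 2 := fun i => if (i : ℕ) < k then 1 else 0

def basisVec (n j : ℕ) : Fin n → ZMod 2 := fun i => if (i : ℕ) = j then 1 else 0

lemma prefixVec_succ (k : ℕ) : prefixVec n (k + 1) = prefixVec n k + basisVec n k := by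
  funext i
  simp only [prefixVec, basisVec, Pi.add_apply]
  split_ifs <;> first | omega | simp

lemma sum_mul_basisVec (f : Fin n → ZMod 2) {m : ℕ} (hm : m < n) :
    ∑ i, f i * basisVec n m i = f ⟨m, hm⟩ := by
  rw [Fintype.sum_eq_single ⟨m, hm⟩ fun i hi => by simp [basisVec, Fin.val_ne_iff.mpr hi]]
  simp [basisVec]

lemma sympl_prefixVec_basisVec {p q j m : ℕ} (hj : j < n) (hm : m < n) :
    sympl (prefixVec n p, basisVec n j) (prefixVec n q, basisVec n m) =
      (if m < p then 1 else 0) + (if j < q then 1 else 0) := by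
  simp only [sympl, sum_add_distrib, sum_mul_basisVec _ hm, mul_comm (basisVec n j _),
    sum_mul_basisVec _ hj, prefixVec]

lemma sympl_prefixVec_basisVec_zero {p q j : ℕ} (hj : j < n) :
    sympl (prefixVec n p, basisVec n j) (prefixVec n q, 0) = if j < q then 1 else 0 := by
  simp only [sympl, Pi.zero_apply, mul_zero, zero_add, mul_comm (basisVec n j _),
    sum_mul_basisVec _ hj, prefixVec]

/-- `majorana n (2j) = (1_{<j}, e_j)` and `majorana n (2j+1) = (1_{≤j}, e_j)`: the Jordan–Wigner
Majorana operators of the `j`-th mode, as vectors of `𝔽₂^{2n}`. -/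
def majorana (n a : ℕ) : V n := (prefixVec n ((a + 1) / 2), basisVec n (a / 2))

lemma sympl_majorana {a b : ℕ} (ha : a / 2 < n) (hb : b / 2 < n) (hab : a ≠ b) :
    sympl (majorana n a) (majorana n b) = 1 := by
  rw [majorana, majorana, sympl_prefixVec_basisVec ha hb]
  split_ifs <;> first | omega | rfl

lemma sum_majorana (k : ℕ) : ∑ a ∈ range (2 * k), majorana n a = (prefixVec n k, 0) := by
  induction k with
  | zero => rfl
  | succ k ih =>
    have h0 : majorana n (2 * k) = (prefixVec n k, basisVec n k) := by
      simp only [majorana, show (2 * k + 1) / 2 = k by omega, show 2 * k / 2 = k by omega]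
    have h1 : majorana n (2 * k + 1) = (prefixVec n (k + 1), basisVec n k) := by
      simp only [majorana, show (2 * k + 1 + 1) / 2 = k + 1 by omega,
        show (2 * k + 1) / 2 = k by omega]
    rw [show 2 * (k + 1) = 2 * k + 1 + 1 by ring, sum_range_succ, sum_range_succ, ih, h0, h1,
      prefixVec_succ]
    ext i <;> simp only [Prod.fst_add, Prod.snd_add, Pi.add_apply, Pi.zero_apply] <;> grind

section Family

variable {ι : Type*} {f : ι → V n} {s : Finset ι}

lemma injOn_of_sympl_eq_one (h : ∀ a ∈ s, ∀ b ∈ s, a ≠ b → sympl (f a) (f b) = 1) :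
    Set.InjOn f s := fun a ha b hb hab =>
  by_contra fun hne => ne_of_sympl_eq_one (h a ha b hb hne) hab

lemma AC_image_of_sympl_eq_one (h : ∀ a ∈ s, ∀ b ∈ s, a ≠ b → sympl (f a) (f b) = 1) :
    AC (s.image f) := by
  simp only [AC, mem_image]
  rintro _ ⟨a, ha, rfl⟩ _ ⟨b, hb, rfl⟩ hne
  exact h a ha b hb fun hab => hne (hab ▸ rfl)

end Family

def ladder (n k a : ℕ) : V n := if a < 2 * k then majorana n a else (prefixVec n k, 0)

lemma sympl_ladder {k a b : ℕ} (hk : k ≤ n) (ha : a < 2 * k + 1) (hb : b < 2 * k + 1)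
    (hab : a ≠ b) : sympl (ladder n k a) (ladder n k b) = 1 := by
  have hmaj_pre {c : ℕ} (hc : c < 2 * k) : sympl (majorana n c) (prefixVec n k, 0) = 1 := by
    rw [majorana, sympl_prefixVec_basisVec_zero (by omega), if_pos (by omega)]
  unfold ladder
  split_ifs with ha' hb' hb'
  · exact sympl_majorana (by omega) (by omega) hab
  · exact hmaj_pre ha'
  · rw [sympl_comm]; exact hmaj_pre hb'
  · omega

lemma sum_ladder (k : ℕ) : ∑ a ∈ range (2 * k + 1), ladder n k a = 0 := by
  have hmaj : ∀ a ∈ range (2 * k), ladder n k a = majorana n a := fun a ha =>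
    if_pos (mem_range.1 ha)
  rw [sum_range_succ, sum_congr rfl hmaj, sum_majorana, ladder, if_neg (lt_irrefl _)]
  ext i <;> simp only [Prod.fst_add, Prod.snd_add, Prod.fst_zero, Prod.snd_zero, Pi.add_apply,
    Pi.zero_apply] <;> grind

end Construction

theorem stmt_14_general {n : ℕ} (ℓ : ℕ) (hodd : Odd ℓ) (h2 : ℓ ≤ 2 * n + 1) :
    ∃ G : Finset (V n), MaxAC G ∧ G.card = ℓ := by
  obtain ⟨k, rfl⟩ := hodd
  have hpair : ∀ a ∈ range (2 * k + 1), ∀ b ∈ range (2 * k + 1), a ≠ b →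
      sympl (ladder n k a) (ladder n k b) = 1 := fun a ha b hb =>
    sympl_ladder (by omega) (mem_range.1 ha) (mem_range.1 hb)
  have hcard : ((range (2 * k + 1)).image (ladder n k)).card = 2 * k + 1 := by
    rw [card_image_of_injOn (injOn_of_sympl_eq_one hpair), card_range]
  refine ⟨_, maxAC_of_sum_eq_zero (AC_image_of_sympl_eq_one hpair) ?_ ?_, hcard⟩
  · rw [hcard]; exact odd_two_mul_add_one k
  · rw [sum_image (injOn_of_sympl_eq_one hpair), sum_ladder]

theorem stmt_14 {n : ℕ} (ℓ : ℕ) (hodd : Odd ℓ) (h1 : 1 ≤ ℓ) (h2 : ℓ ≤ 2 * n + 1) :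
    ∃ G : Finset (V n), MaxAC G ∧ G.card = ℓ :=
  stmt_14_general ℓ hodd h2
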